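/- For a ∈ {0,1}^d and ε ∈ (0,1/4), let |ψ_a⟩ = Σ_{i∈[d],ℓ∈{0,1}} √(D_a(i,ℓ)) |i,ℓ⟩ where D_a(i,ℓ) = (1+(−1)^{a_i+ℓ}4ε)/(2d), and let ρ = 2^{−d} Σ_{a∈{0,1}^d} |ψ_a⟩⟨ψ_a|. Then the largest eigenvalue of ρ is at least 1 − 4ε² − O(ε⁴); specifically, for |ψ⟩ = (2d)^{−1/2} Σ_{i,ℓ}|i,ℓ⟩ one has ⟨ψ|ρ|ψ⟩ = ((√(1+4ε)+√(1−4ε))/2)² ≥ (1 − 2ε² − O(ε⁴))². -/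

import Mathlib

open Matrix Finset

/-- The agnostic-learning quantum example state `|ψ_a⟩` has amplitudes
`√(D_a(i,ℓ))` with `D_a(i,ℓ) = (1+(-1)^{a_i+ℓ} 4ε)/(2d)`. -/
noncomputable def agnState (d : ℕ) (ε : ℝ) (a : Fin d → ZMod 2) :
    Fin d × ZMod 2 → ℝ :=
  fun x => Real.sqrt ((1 + (-1 : ℝ) ^ (a x.1 + x.2).val * 4 * ε) / (2 * d))

/-- The average state `ρ = 2^{-d} Σ_a |ψ_a⟩⟨ψ_a|`. -/
noncomputable def agnRho (d : ℕ) (ε : ℝ) : Matrix (Fin d × ZMod 2) (Fin d × ZMod 2) ℝ :=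
  (2 ^ d : ℝ)⁻¹ • ∑ a : Fin d → ZMod 2, Matrix.vecMulVec (agnState d ε a) (agnState d ε a)


/-! The uniform vector `ψ` is an exact eigenvector of `ρ`. Writing `ψ_a(i, ℓ) = g (a_i + ℓ)`,
every `ψ_a` has the same overlap with `ψ`, since each block `ℓ ↦ g (a_i + ℓ)` sums to
`g 0 + g 1`; and `∑_a ψ_a(i, ℓ)` does not depend on `(i, ℓ)`, since `a_i` is uniformly
distributed. So `ρψ = μψ` with `μ = d (g 0 + g 1)² / 2 = ((√(1+4ε) + √(1-4ε))/2)²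
= (1 + √(1-16ε²))/2`, and `√(1-t) ≥ 1 - t/2 - t²/2` on `[0, 1]` gives `μ ≥ 1 - 4ε² - 64ε⁴`. -/

theorem Fintype.card_nsmul_sum_comp_apply {ι G M : Type*} [Fintype ι] [DecidableEq ι]
    [AddGroup G] [Fintype G] [AddCommMonoid M] (f : G → M) (i : ι) :
    Fintype.card G • ∑ a : ι → G, f (a i) = Fintype.card (ι → G) • ∑ b, f b := by
  calc Fintype.card G • ∑ a : ι → G, f (a i)
      = ∑ b : G, ∑ a : ι → G, f ((a + Pi.single i b : ι → G) i) := by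
        rw [← Finset.card_univ, ← Finset.sum_const]
        refine Finset.sum_congr rfl fun b _ => ?_
        exact (Equiv.sum_comp (Equiv.addRight (Pi.single i b)) fun a : ι → G => f (a i)).symm
    _ = ∑ a : ι → G, ∑ b : G, f (a i + b) := by
        rw [Finset.sum_comm]
        simp
    _ = Fintype.card (ι → G) • ∑ b, f b := by
        rw [← Finset.card_univ, ← Finset.sum_const]
        exact Finset.sum_congr rfl fun a _ => Equiv.sum_comp (Equiv.addLeft (a i)) f

theorem Matrix.mem_spectrum_of_mulVec_eq_smul {R n : Type*} [CommRing R] [Fintype n]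
    [DecidableEq n] {A : Matrix n n R} {v : n → R} {μ : R} (hv : v ≠ 0)
    (h : A *ᵥ v = μ • v) : μ ∈ spectrum R A := by
  rw [← Matrix.spectrum_toLin']
  exact (Module.End.hasEigenvalue_of_hasEigenvector
    ⟨Module.End.mem_eigenspace_iff.2 h, hv⟩).mem_spectrum

def shiftState {ι G K : Type*} [Add G] (g : G → K) (a : ι → G) (x : ι × G) : K :=
  g (a x.1 + x.2)

section ShiftState

variable {ι G K : Type*} [Fintype ι] [AddGroup G] [Fintype G]

theorem shiftState_dotProduct_const [Semiring K] (g : G → K) (a : ι → G) (c : K) :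
    shiftState g a ⬝ᵥ (fun _ => c) = Fintype.card ι * (∑ b, g b) * c := by
  have hshift (b : G) : ∑ y, g (b + y) = ∑ y, g y := Equiv.sum_comp (Equiv.addLeft b) g
  simp [dotProduct, shiftState, Fintype.sum_prod_type, ← Finset.sum_mul, hshift]

theorem card_mul_sum_shiftState_apply [DecidableEq ι] [Semiring K] (g : G → K) (x : ι × G) :
    Fintype.card G * ∑ a, shiftState g a x = Fintype.card (ι → G) * ∑ b, g b := by
  have hshift : ∑ b, g (b + x.2) = ∑ b, g b := Equiv.sum_comp (Equiv.addRight x.2) g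
  simpa only [shiftState, nsmul_eq_mul, hshift] using
    Fintype.card_nsmul_sum_comp_apply (fun b => g (b + x.2)) x.1

theorem smul_sum_vecMulVec_shiftState_mulVec_const [DecidableEq ι] [Field K] [CharZero K]
    (g : G → K) (c : K) :
    ((Fintype.card (ι → G) : K)⁻¹ • ∑ a : ι → G, vecMulVec (shiftState g a) (shiftState g a)) *ᵥ
        (fun _ => c) = (Fintype.card ι * (∑ b, g b) ^ 2 / Fintype.card G) • fun _ => c := by
  ext x
  have hG : (Fintype.card G : K) ≠ 0 := Nat.cast_ne_zero.2 Fintype.card_ne_zero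
  have hιG : (Fintype.card (ι → G) : K) ≠ 0 := Nat.cast_ne_zero.2 Fintype.card_ne_zero
  have hsum := card_mul_sum_shiftState_apply g x
  simp only [smul_mulVec, sum_mulVec, vecMulVec_mulVec, shiftState_dotProduct_const,
    Pi.smul_apply, Finset.sum_apply, smul_eq_mul, MulOpposite.smul_eq_mul_unop,
    MulOpposite.unop_op, ← Finset.sum_mul]
  field_simp
  linear_combination (Fintype.card ι * (∑ b, g b) * c) * hsum

end ShiftState

namespace Real

theorem sqrt_one_add_add_sqrt_one_sub_div_two_sq {x : ℝ} (hx₀ : -1 ≤ x) (hx₁ : x ≤ 1) :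
    ((√(1 + x) + √(1 - x)) / 2) ^ 2 = (1 + √(1 - x ^ 2)) / 2 := by
  have hprod : √(1 + x) * √(1 - x) = √(1 - x ^ 2) := by
    rw [← sqrt_mul (by linarith)]
    ring_nf
  rw [div_pow, add_sq, sq_sqrt (by linarith), sq_sqrt (by linarith), mul_assoc, hprod]
  ring

theorem one_sub_div_two_sub_sq_div_two_le_sqrt_one_sub {t : ℝ} (ht₀ : 0 ≤ t) (ht₁ : t ≤ 1) :
    1 - t / 2 - t ^ 2 / 2 ≤ √(1 - t) := by
  refine le_sqrt_of_sq_le ?_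
  -- `1 - t - (1 - t/2 - t²/2)² = t² (3 + t) (1 - t) / 4`
  nlinarith [mul_nonneg (mul_nonneg (sq_nonneg t) (by linarith : 0 ≤ t + 3))
    (by linarith : 0 ≤ 1 - t)]

theorem one_sub_sq_div_four_sub_pow_four_div_four_le {x : ℝ} (hx₀ : -1 ≤ x) (hx₁ : x ≤ 1) :
    1 - x ^ 2 / 4 - x ^ 4 / 4 ≤ ((√(1 + x) + √(1 - x)) / 2) ^ 2 := by
  have hx2 : x ^ 2 ≤ 1 := by nlinarith
  have := one_sub_div_two_sub_sq_div_two_le_sqrt_one_sub (sq_nonneg x) hx2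
  rw [sqrt_one_add_add_sqrt_one_sub_div_two_sq hx₀ hx₁]
  linarith

end Real

noncomputable def agnAmplitude (d : ℕ) (ε : ℝ) (b : ZMod 2) : ℝ :=
  √((1 + (-1 : ℝ) ^ b.val * 4 * ε) / (2 * d))

theorem agnState_eq_shiftState (d : ℕ) (ε : ℝ) :
    agnState d ε = shiftState (agnAmplitude d ε) :=
  rfl

theorem sum_agnAmplitude (d : ℕ) (ε : ℝ) :
    ∑ b, agnAmplitude d ε b = (√(1 + 4 * ε) + √(1 - 4 * ε)) / √(2 * d) := by
  have hd : (0 : ℝ) ≤ 2 * d := by positivity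
  rw [show ∑ b, agnAmplitude d ε b = agnAmplitude d ε 0 + agnAmplitude d ε 1 from
    Fin.sum_univ_two _, add_div, agnAmplitude, agnAmplitude, Real.sqrt_div' _ hd,
    Real.sqrt_div' _ hd]
  norm_num [ZMod.val_one, sub_eq_add_neg]

theorem agnRho_mulVec_const {d : ℕ} (hd : 0 < d) (ε c : ℝ) :
    agnRho d ε *ᵥ (fun _ => c) = ((√(1 + 4 * ε) + √(1 - 4 * ε)) / 2) ^ 2 • fun _ => c := by
  have hcard : (Fintype.card (Fin d → ZMod 2) : ℝ) = 2 ^ d := by simp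
  rw [agnRho, ← hcard, agnState_eq_shiftState, smul_sum_vecMulVec_shiftState_mulVec_const,
    sum_agnAmplitude]
  congr 1
  have h2d : (0 : ℝ) < 2 * d := by positivity
  rw [div_pow, Real.sq_sqrt h2d.le]
  simp only [Fintype.card_fin, ZMod.card, Nat.cast_ofNat]
  field_simp

/-- For the uniform unit vector `|ψ⟩ = (2d)^{-1/2} Σ_{i,ℓ} |i,ℓ⟩`, one has
`⟨ψ|ρ|ψ⟩ = ((√(1+4ε)+√(1-4ε))/2)² ≥ (1 - 2ε² - 44ε⁴)²`, hence the largest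
eigenvalue of `ρ` is at least `1 - 4ε² - 88ε⁴` (i.e. `1 - 4ε² - O(ε⁴)`). -/
theorem agnRho_top_eigenvalue (d : ℕ) (hd : 0 < d) (ε : ℝ) (hε0 : 0 < ε) (hε : ε < 1 / 4) :
    (let ψ : Fin d × ZMod 2 → ℝ := fun _ => (Real.sqrt (2 * d))⁻¹;
      ψ ⬝ᵥ (agnRho d ε).mulVec ψ
        = ((Real.sqrt (1 + 4 * ε) + Real.sqrt (1 - 4 * ε)) / 2) ^ 2 ∧
      (1 - 2 * ε ^ 2 - 44 * ε ^ 4) ^ 2 ≤ ψ ⬝ᵥ (agnRho d ε).mulVec ψ) ∧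
    ∃ μ ∈ spectrum ℝ (agnRho d ε), 1 - 4 * ε ^ 2 - 88 * ε ^ 4 ≤ μ := by
  have hμ : 1 - 4 * ε ^ 2 - 64 * ε ^ 4 ≤ ((√(1 + 4 * ε) + √(1 - 4 * ε)) / 2) ^ 2 := by
    have := Real.one_sub_sq_div_four_sub_pow_four_div_four_le (x := 4 * ε)
      (by linarith) (by linarith)
    linarith [show (4 * ε) ^ 2 / 4 = 4 * ε ^ 2 by ring, show (4 * ε) ^ 4 / 4 = 64 * ε ^ 4 by ring]
  have hquartic : (1 - 2 * ε ^ 2 - 44 * ε ^ 4) ^ 2 ≤ 1 - 4 * ε ^ 2 - 64 * ε ^ 4 := by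
    have hε2 : ε ^ 2 ≤ 1 / 16 := by nlinarith
    nlinarith [sq_nonneg ε, mul_nonneg (pow_nonneg hε0.le 4) (by linarith : 0 ≤ 1 / 16 - ε ^ 2)]
  set μ := ((√(1 + 4 * ε) + √(1 - 4 * ε)) / 2) ^ 2
  set ψ : Fin d × ZMod 2 → ℝ := fun _ => (√(2 * d))⁻¹
  have hψ_eigen : agnRho d ε *ᵥ ψ = μ • ψ := agnRho_mulVec_const hd ε _
  have hψ_unit : ψ ⬝ᵥ ψ = 1 := by
    have h2d : (0 : ℝ) < 2 * d := by positivity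
    simp only [ψ, dotProduct, Finset.sum_const, Finset.card_univ, Fintype.card_prod,
      Fintype.card_fin, ZMod.card, nsmul_eq_mul, ← mul_inv, Real.mul_self_sqrt h2d.le]
    push_cast
    field_simp
  have hψ_ne : ψ ≠ 0 := fun h => hd.ne' (by simpa [ψ] using congrFun h (⟨0, hd⟩, 0))
  have hψ_value : ψ ⬝ᵥ agnRho d ε *ᵥ ψ = μ := by
    rw [hψ_eigen, dotProduct_smul, hψ_unit, smul_eq_mul, mul_one]
  refine ⟨⟨hψ_value, hψ_value ▸ hquartic.trans hμ⟩,
    μ, mem_spectrum_of_mulVec_eq_smul hψ_ne hψ_eigen, by nlinarith [pow_pos hε0 4]⟩
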